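/- arXiv:2601.02108 — 2 statements merged into one kernel-verified Lean document; each statement's English description precedes it below -/
import Mathlib

section
/- Invariance of eigenvector orthogonality under one scheme step (Lemma 3.3): Let H be an n×n real symmetric matrix with λ₁·Iₙ ≤ H ≤ λₘₐₓ·Iₙ in the Loewner order, for reals λ₁ ≤ λₘₐₓ. Let v ∈ ℝⁿ be nonzero with H·v = μ·v for some μ ∈ ℝ. Let U, Ũ, Û, U' be n×N real matrices and s > 0 satisfy Û = U − s·𝒜_Ũ·Ũ, Ũ = (U + Û)/2, and U' = Û − s·H·Û·(I_N − Ûᵀ·Û). Assume Uᵀ·U ≤ I_N and s·(λₘₐₓ − λ₁) < 2. If Uᵀ·v = 0 (v is orthogonal to every column of U), then Ûᵀ·v = 0 and U'ᵀ·v = 0. -/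
/-! With w = Ũᵀv, orthogonality and the midpoint rule give Ûᵀv = 2w, and the skew-symmetry of
𝒜 = 𝒜_Ũ turns the predictor equation into the fixed-point identity w = (s/2)·Ũᵀ(H − μ)Ũw.
Pairing it with w gives |w|² = (s/2)·yᵀ(H − μ)y ≤ (s/2)(λₘₐₓ − λ₁)|y|² for y = Ũw, since
μ ≥ λ₁. As Uw = y + (s/2)𝒜y with 𝒜 skew, |y| ≤ |Uw| ≤ |w|, so the factor s(λₘₐₓ − λ₁)/2 < 1
forces w = 0. The corrector then sends Ûᵀv = 0 to U'ᵀv = Ûᵀv − sμ(I − ÛᵀÛ)Ûᵀv = 0. -/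

open Matrix

noncomputable section

/-- The skew-symmetric commutator 𝒜_W = H·W·Wᵀ − W·Wᵀ·H. -/
def commA {n N : ℕ} (H : Matrix (Fin n) (Fin n) ℝ) (W : Matrix (Fin n) (Fin N) ℝ) :
    Matrix (Fin n) (Fin n) ℝ :=
  H * W * Wᵀ - W * Wᵀ * H

/-- Loewner order: X ≤ Y iff Y − X is positive semidefinite. -/
def loewnerLE {k : ℕ} (X Y : Matrix (Fin k) (Fin k) ℝ) : Prop :=
  (Y - X).PosSemidef

theorem eq_add_smul_and_eq_sub_smul_of_implicit_midpoint {K E : Type*} [Field K] [CharZero K]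
    [AddCommGroup E] [Module K E] {U Ut Uhat X : E} {s : K}
    (hpred : Uhat = U - s • X) (hmid : Ut = (1 / 2 : K) • (U + Uhat)) :
    U = Ut + (s / 2) • X ∧ Uhat = Ut - (s / 2) • X := by
  subst hmid hpred
  constructor <;> module

section Skew

variable {m R : Type*} [Fintype m] [Field R] [LinearOrder R] [IsStrictOrderedRing R]

theorem dotProduct_self_nonneg (y : m → R) : 0 ≤ y ⬝ᵥ y :=
  Finset.sum_nonneg fun i _ => mul_self_nonneg (y i)

theorem dotProduct_mulVec_self_eq_zero_of_transpose_eq_neg {A : Matrix m m R} (hA : Aᵀ = -A)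
    (y : m → R) : y ⬝ᵥ A *ᵥ y = 0 := by
  have h : y ⬝ᵥ A *ᵥ y = -(y ⬝ᵥ A *ᵥ y) := by
    conv_lhs =>
      rw [dotProduct_mulVec, ← mulVec_transpose, hA, neg_mulVec, neg_dotProduct, dotProduct_comm]
  linarith

theorem dotProduct_self_le_of_transpose_eq_neg {A : Matrix m m R} (hA : Aᵀ = -A) (y : m → R) :
    y ⬝ᵥ y ≤ (y + A *ᵥ y) ⬝ᵥ (y + A *ᵥ y) := by
  have hskew := dotProduct_mulVec_self_eq_zero_of_transpose_eq_neg hA y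
  have hexpand : (y + A *ᵥ y) ⬝ᵥ (y + A *ᵥ y) = y ⬝ᵥ y + (A *ᵥ y) ⬝ᵥ (A *ᵥ y) := by
    rw [add_dotProduct, dotProduct_add, dotProduct_add, hskew, dotProduct_comm (A *ᵥ y) y, hskew]
    ring
  rw [hexpand]
  exact le_add_of_nonneg_right (dotProduct_self_nonneg _)

theorem eq_zero_of_dotProduct_self_le_mul {x : m → R} {c : R} (hc : c < 1)
    (h : x ⬝ᵥ x ≤ c * (x ⬝ᵥ x)) : x = 0 := by
  have hnonneg := dotProduct_self_nonneg x
  exact dotProduct_self_eq_zero.mp (by nlinarith)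

end Skew

section Loewner

variable {k : ℕ}

theorem loewnerLE.dotProduct_mulVec_le {X Y : Matrix (Fin k) (Fin k) ℝ} (h : loewnerLE X Y)
    (x : Fin k → ℝ) : x ⬝ᵥ X *ᵥ x ≤ x ⬝ᵥ Y *ᵥ x := by
  have := h.dotProduct_mulVec_nonneg x
  rw [star_trivial, sub_mulVec, dotProduct_sub] at this
  linarith

theorem dotProduct_smul_one_mulVec (c : ℝ) (x : Fin k → ℝ) :
    x ⬝ᵥ (c • (1 : Matrix (Fin k) (Fin k) ℝ)) *ᵥ x = c * (x ⬝ᵥ x) := by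
  rw [smul_mulVec, one_mulVec, dotProduct_smul, smul_eq_mul]

theorem le_of_loewnerLE_of_mulVec_eq_smul {H : Matrix (Fin k) (Fin k) ℝ} {c μ : ℝ}
    {v : Fin k → ℝ} (h : loewnerLE (c • 1) H) (hv : v ≠ 0) (hev : H *ᵥ v = μ • v) : c ≤ μ := by
  have hle := h.dotProduct_mulVec_le v
  rw [dotProduct_smul_one_mulVec, hev, dotProduct_smul, smul_eq_mul] at hle
  have hpos : 0 < v ⬝ᵥ v :=
    (dotProduct_self_nonneg v).lt_of_ne (Ne.symm (dotProduct_self_eq_zero.not.mpr hv))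
  exact le_of_mul_le_mul_right hle hpos

theorem dotProduct_mulVec_sub_smul_le {H : Matrix (Fin k) (Fin k) ℝ} {a b μ : ℝ}
    (hHup : loewnerLE H (b • 1)) (hμ : a ≤ μ) (y : Fin k → ℝ) :
    y ⬝ᵥ (H *ᵥ y - μ • y) ≤ (b - a) * (y ⬝ᵥ y) := by
  have hle := hHup.dotProduct_mulVec_le y
  rw [dotProduct_smul_one_mulVec] at hle
  rw [dotProduct_sub, dotProduct_smul, smul_eq_mul]
  nlinarith [dotProduct_self_nonneg y]

end Loewner

section Commutator

variable {n N : ℕ} {H : Matrix (Fin n) (Fin n) ℝ}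

theorem commA_transpose (hH : H.IsSymm) (W : Matrix (Fin n) (Fin N) ℝ) :
    (commA H W)ᵀ = -commA H W := by
  simp only [commA, transpose_sub, transpose_mul, transpose_transpose, hH.eq, neg_sub,
    Matrix.mul_assoc]

theorem commA_mulVec_of_mulVec_eq_smul {v : Fin n → ℝ} {μ : ℝ} (hev : H *ᵥ v = μ • v)
    (W : Matrix (Fin n) (Fin N) ℝ) :
    commA H W *ᵥ v = H *ᵥ W *ᵥ Wᵀ *ᵥ v - μ • W *ᵥ Wᵀ *ᵥ v := by
  rw [commA, sub_mulVec, ← mulVec_mulVec, ← mulVec_mulVec, ← mulVec_mulVec, ← mulVec_mulVec,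
    hev, mulVec_smul, mulVec_smul]

end Commutator

section Scheme

variable {n N : ℕ} {H : Matrix (Fin n) (Fin n) ℝ} {v : Fin n → ℝ} {μ s : ℝ}
  {U Ut Uhat : Matrix (Fin n) (Fin N) ℝ}

theorem transpose_mulVec_eq_two_smul_of_midpoint (hmid : Ut = (1 / 2 : ℝ) • (U + Uhat))
    (horth : Uᵀ *ᵥ v = 0) : Uhatᵀ *ᵥ v = (2 : ℝ) • Utᵀ *ᵥ v := by
  rw [hmid, transpose_smul, transpose_add, smul_mulVec, add_mulVec, horth, zero_add, smul_smul]
  norm_num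

theorem midpoint_transpose_mulVec_eq_smul (hH : H.IsSymm) (hev : H *ᵥ v = μ • v)
    (hpred : Uhat = U - s • (commA H Ut * Ut)) (hmid : Ut = (1 / 2 : ℝ) • (U + Uhat))
    (horth : Uᵀ *ᵥ v = 0) :
    Utᵀ *ᵥ v = (s / 2) • Utᵀ *ᵥ (H *ᵥ Ut *ᵥ Utᵀ *ᵥ v - μ • Ut *ᵥ Utᵀ *ᵥ v) := by
  obtain ⟨-, hUhat⟩ := eq_add_smul_and_eq_sub_smul_of_implicit_midpoint hpred hmid
  have hdouble := transpose_mulVec_eq_two_smul_of_midpoint hmid horth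
  have hstep : Uhatᵀ *ᵥ v = Utᵀ *ᵥ v + (s / 2) • Utᵀ *ᵥ commA H Ut *ᵥ v := by
    rw [hUhat, transpose_sub, transpose_smul, transpose_mul, commA_transpose hH, sub_mulVec,
      smul_mulVec, ← mulVec_mulVec, neg_mulVec, mulVec_neg, smul_neg, sub_neg_eq_add]
  rw [hdouble, commA_mulVec_of_mulVec_eq_smul hev] at hstep
  linear_combination (norm := module) hstep

theorem predictor_transpose_mulVec_eq_zero (hH : H.IsSymm) {lam1 lamMax : ℝ}
    (hll : lam1 ≤ lamMax) (hHlow : loewnerLE (lam1 • 1) H) (hHup : loewnerLE H (lamMax • 1))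
    (hv : v ≠ 0) (hev : H *ᵥ v = μ • v) (hs : 0 < s) (hpred : Uhat = U - s • (commA H Ut * Ut))
    (hmid : Ut = (1 / 2 : ℝ) • (U + Uhat)) (hUle : loewnerLE (Uᵀ * U) 1)
    (hstep : s * (lamMax - lam1) < 2) (horth : Uᵀ *ᵥ v = 0) : Uhatᵀ *ᵥ v = 0 := by
  obtain ⟨hU, -⟩ := eq_add_smul_and_eq_sub_smul_of_implicit_midpoint hpred hmid
  have hfix := midpoint_transpose_mulVec_eq_smul hH hev hpred hmid horth
  have hdouble := transpose_mulVec_eq_two_smul_of_midpoint hmid horth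
  set w := Utᵀ *ᵥ v
  set y := Ut *ᵥ w
  have henergy : w ⬝ᵥ w = s / 2 * (y ⬝ᵥ (H *ᵥ y - μ • y)) := by
    nth_rewrite 2 [hfix]
    rw [dotProduct_smul, dotProduct_mulVec, vecMul_transpose, smul_eq_mul]
  have hrayleigh : y ⬝ᵥ (H *ᵥ y - μ • y) ≤ (lamMax - lam1) * (y ⬝ᵥ y) :=
    dotProduct_mulVec_sub_smul_le hHup (le_of_loewnerLE_of_mulVec_eq_smul hHlow hv hev) y
  have hcontract : y ⬝ᵥ y ≤ w ⬝ᵥ w := calc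
    y ⬝ᵥ y ≤ (U *ᵥ w) ⬝ᵥ (U *ᵥ w) := by
      have hUw : U *ᵥ w = y + ((s / 2) • commA H Ut) *ᵥ y := by
        rw [hU, add_mulVec, smul_mulVec, smul_mulVec, ← mulVec_mulVec]
      rw [hUw]
      refine dotProduct_self_le_of_transpose_eq_neg ?_ y
      rw [transpose_smul, commA_transpose hH, smul_neg]
    _ = w ⬝ᵥ (Uᵀ * U) *ᵥ w := by rw [← mulVec_mulVec, dotProduct_mulVec w, vecMul_transpose]
    _ ≤ w ⬝ᵥ (1 : Matrix (Fin N) (Fin N) ℝ) *ᵥ w := hUle.dotProduct_mulVec_le w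
    _ = w ⬝ᵥ w := by rw [one_mulVec]
  have hw : w = 0 := by
    refine eq_zero_of_dotProduct_self_le_mul (c := s * (lamMax - lam1) / 2) (by linarith) ?_
    have hgap : 0 ≤ s / 2 * (lamMax - lam1) := by have := sub_nonneg.mpr hll; positivity
    calc w ⬝ᵥ w ≤ s / 2 * ((lamMax - lam1) * (y ⬝ᵥ y)) := by
          rw [henergy]; gcongr
      _ ≤ s / 2 * (lamMax - lam1) * (w ⬝ᵥ w) := by
          rw [← mul_assoc]; exact mul_le_mul_of_nonneg_left hcontract hgap
      _ = s * (lamMax - lam1) / 2 * (w ⬝ᵥ w) := by ring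
  rw [hdouble, hw, smul_zero]

end Scheme

theorem transpose_mulVec_sub_smul_mul_eq_zero {m k R : Type*} [Fintype m] [Fintype k]
    [CommRing R] {H : Matrix m m R} (hH : H.IsSymm) {v : m → R} {μ : R} (hev : H *ᵥ v = μ • v)
    {Uhat : Matrix m k R} (h : Uhatᵀ *ᵥ v = 0) (s : R) (K : Matrix k k R) :
    (Uhat - s • (H * Uhat * K))ᵀ *ᵥ v = 0 := by
  rw [transpose_sub, transpose_smul, transpose_mul, transpose_mul, hH.eq, sub_mulVec, smul_mulVec,
    ← mulVec_mulVec, ← mulVec_mulVec, hev, mulVec_smul, h, smul_zero, mulVec_zero, smul_zero,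
    sub_zero]

/-- Invariance of eigenvector orthogonality under one scheme step (Lemma 3.3). -/
theorem eigenvector_orthogonality_invariance
    {n N : ℕ} (H : Matrix (Fin n) (Fin n) ℝ) (hH : H.IsSymm)
    (lam1 lamMax : ℝ) (hll : lam1 ≤ lamMax)
    (hHlow : loewnerLE (lam1 • (1 : Matrix (Fin n) (Fin n) ℝ)) H)
    (hHup : loewnerLE H (lamMax • (1 : Matrix (Fin n) (Fin n) ℝ)))
    (v : Fin n → ℝ) (hv : v ≠ 0) (μ : ℝ) (hev : H.mulVec v = μ • v)
    (U Ut Uhat U' : Matrix (Fin n) (Fin N) ℝ) (s : ℝ) (hs : 0 < s)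
    (hpred : Uhat = U - s • (commA H Ut * Ut))
    (hmid : Ut = (1 / 2 : ℝ) • (U + Uhat))
    (hcorr : U' = Uhat - s • (H * Uhat * (1 - Uhatᵀ * Uhat)))
    (hUle : loewnerLE (Uᵀ * U) 1)
    (hstep : s * (lamMax - lam1) < 2)
    (horth : Uᵀ.mulVec v = 0) :
    Uhatᵀ.mulVec v = 0 ∧ U'ᵀ.mulVec v = 0 := by
  have hUhat := predictor_transpose_mulVec_eq_zero hH hll hHlow hHup hv hev hs hpred hmid hUle
    hstep horth
  exact ⟨hUhat, hcorr ▸ transpose_mulVec_sub_smul_mul_eq_zero hH hev hUhat s _⟩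
end
end

section
/- Lipschitz continuity of U ↦ 𝒜_U (Lemma 4.4, second inequality): Let H be an n×n real symmetric matrix with σ_max(H) ≤ M, and let U₁, U₂ be n×N real matrices with σ_max(U₁) ≤ α and σ_max(U₂) ≤ α. Then ‖𝒜_{U₁} − 𝒜_{U₂}‖_F ≤ 4·α·M·‖U₁ − U₂‖_F. -/
open Matrix

noncomputable section

/-- Frobenius norm of a real matrix. -/
def frobNorm {m k : ℕ} (A : Matrix (Fin m) (Fin k) ℝ) : ℝ :=
  Real.sqrt (∑ i, ∑ j, (A i j) ^ 2)

/-- Largest singular value (ℓ²-operator norm) of a real matrix. -/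
def sigmaMax {m k : ℕ} (A : Matrix (Fin m) (Fin k) ℝ) : ℝ :=
  ‖LinearMap.toContinuousLinearMap (Matrix.toEuclideanLin A)‖

/-!
`𝒜_U = H G - G H` depends on `U` only through the Gram matrix `G = U Uᵀ`, and
`U₁ U₁ᵀ - U₂ U₂ᵀ = U₁ (U₁ - U₂)ᵀ + (U₁ - U₂) U₂ᵀ`. Each product is then bounded by
`‖A B‖_F ≤ σ_max(A) ‖B‖_F`, applied column by column, together with its transpose
`‖A B‖_F ≤ ‖A‖_F σ_max(B)` (which uses `σ_max(Bᵀ) = σ_max(B)`).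
-/

attribute [local instance] Matrix.frobeniusNormedAddCommGroup

lemma frobNorm_eq_norm {m k : ℕ} (A : Matrix (Fin m) (Fin k) ℝ) : frobNorm A = ‖A‖ := by
  simp [frobNorm, frobenius_norm_def, Real.sqrt_eq_rpow]

lemma frobNorm_transpose {m k : ℕ} (A : Matrix (Fin m) (Fin k) ℝ) : frobNorm Aᵀ = frobNorm A := by
  simp only [frobNorm_eq_norm, frobenius_norm_transpose]

lemma frobNorm_sq_eq_sum_col {m k : ℕ} (A : Matrix (Fin m) (Fin k) ℝ) :
    frobNorm A ^ 2 = ∑ j, ‖WithLp.toLp 2 (Aᵀ j)‖ ^ 2 := by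
  rw [frobNorm, Real.sq_sqrt (by positivity), Finset.sum_comm]
  simp [EuclideanSpace.norm_sq_eq]

lemma sigmaMax_transpose {m k : ℕ} (A : Matrix (Fin m) (Fin k) ℝ) :
    sigmaMax Aᵀ = sigmaMax A := by
  have := @l2_opNorm_conjTranspose ℝ _ _ _ _ _ _ _ A
  rwa [conjTranspose_eq_transpose_of_trivial] at this

lemma frobNorm_mul_le_sigmaMax_mul {m k l : ℕ} (A : Matrix (Fin m) (Fin k) ℝ)
    (B : Matrix (Fin k) (Fin l) ℝ) : frobNorm (A * B) ≤ sigmaMax A * frobNorm B := by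
  have hcol (j : Fin l) :
      ‖WithLp.toLp 2 ((A * B)ᵀ j)‖ ≤ sigmaMax A * ‖WithLp.toLp 2 (Bᵀ j)‖ :=
    (LinearMap.toContinuousLinearMap (toEuclideanLin A)).le_opNorm (WithLp.toLp 2 (Bᵀ j))
  refine le_of_pow_le_pow_left₀ two_ne_zero (by unfold sigmaMax frobNorm; positivity) ?_
  rw [mul_pow, frobNorm_sq_eq_sum_col, frobNorm_sq_eq_sum_col, Finset.mul_sum]
  gcongr with j
  simpa [mul_pow] using pow_le_pow_left₀ (norm_nonneg _) (hcol j) 2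

lemma frobNorm_mul_le_mul_sigmaMax {m k l : ℕ} (A : Matrix (Fin m) (Fin k) ℝ)
    (B : Matrix (Fin k) (Fin l) ℝ) : frobNorm (A * B) ≤ frobNorm A * sigmaMax B := by
  calc frobNorm (A * B) = frobNorm (Bᵀ * Aᵀ) := by rw [← transpose_mul, frobNorm_transpose]
    _ ≤ sigmaMax Bᵀ * frobNorm Aᵀ := frobNorm_mul_le_sigmaMax_mul _ _
    _ = frobNorm A * sigmaMax B := by rw [sigmaMax_transpose, frobNorm_transpose, mul_comm]

lemma frobNorm_gram_sub_gram_le {m k : ℕ} (U₁ U₂ : Matrix (Fin m) (Fin k) ℝ) :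
    frobNorm (U₁ * U₁ᵀ - U₂ * U₂ᵀ) ≤ (sigmaMax U₁ + sigmaMax U₂) * frobNorm (U₁ - U₂) := by
  have hsplit : U₁ * U₁ᵀ - U₂ * U₂ᵀ = U₁ * (U₁ - U₂)ᵀ + (U₁ - U₂) * U₂ᵀ := by
    simp only [transpose_sub, Matrix.mul_sub, Matrix.sub_mul]
    abel
  calc frobNorm (U₁ * U₁ᵀ - U₂ * U₂ᵀ)
      ≤ frobNorm (U₁ * (U₁ - U₂)ᵀ) + frobNorm ((U₁ - U₂) * U₂ᵀ) := by
        simpa only [hsplit, frobNorm_eq_norm] using norm_add_le _ _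
    _ ≤ sigmaMax U₁ * frobNorm (U₁ - U₂)ᵀ + frobNorm (U₁ - U₂) * sigmaMax U₂ᵀ :=
        add_le_add (frobNorm_mul_le_sigmaMax_mul _ _) (frobNorm_mul_le_mul_sigmaMax _ _)
    _ = (sigmaMax U₁ + sigmaMax U₂) * frobNorm (U₁ - U₂) := by
        rw [frobNorm_transpose, sigmaMax_transpose]
        ring

lemma frobNorm_commutator_le {m : ℕ} (H D : Matrix (Fin m) (Fin m) ℝ) :
    frobNorm (H * D - D * H) ≤ 2 * sigmaMax H * frobNorm D := by
  calc frobNorm (H * D - D * H) ≤ frobNorm (H * D) + frobNorm (D * H) := by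
        simpa only [frobNorm_eq_norm] using norm_sub_le _ _
    _ ≤ sigmaMax H * frobNorm D + frobNorm D * sigmaMax H :=
        add_le_add (frobNorm_mul_le_sigmaMax_mul _ _) (frobNorm_mul_le_mul_sigmaMax _ _)
    _ = 2 * sigmaMax H * frobNorm D := by ring

lemma commA_sub_commA {n N : ℕ} (H : Matrix (Fin n) (Fin n) ℝ) (U₁ U₂ : Matrix (Fin n) (Fin N) ℝ) :
    commA H U₁ - commA H U₂ =
      H * (U₁ * U₁ᵀ - U₂ * U₂ᵀ) - (U₁ * U₁ᵀ - U₂ * U₂ᵀ) * H := by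
  simp only [commA, Matrix.mul_sub, Matrix.sub_mul, Matrix.mul_assoc]
  abel

theorem commA_lipschitz_general
    {n N : ℕ} (H : Matrix (Fin n) (Fin n) ℝ)
    (M α : ℝ) (hM : sigmaMax H ≤ M)
    (U₁ U₂ : Matrix (Fin n) (Fin N) ℝ)
    (hU₁ : sigmaMax U₁ ≤ α) (hU₂ : sigmaMax U₂ ≤ α) :
    frobNorm (commA H U₁ - commA H U₂) ≤ 4 * α * M * frobNorm (U₁ - U₂) := by
  have hσH : 0 ≤ sigmaMax H := norm_nonneg _
  have hσ₁ : 0 ≤ sigmaMax U₁ := norm_nonneg _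
  have hσ₂ : 0 ≤ sigmaMax U₂ := norm_nonneg _
  have hM₀ : 0 ≤ M := hσH.trans hM
  have hF : 0 ≤ frobNorm (U₁ - U₂) := Real.sqrt_nonneg _
  calc frobNorm (commA H U₁ - commA H U₂)
      ≤ 2 * sigmaMax H * frobNorm (U₁ * U₁ᵀ - U₂ * U₂ᵀ) := by
        rw [commA_sub_commA]
        exact frobNorm_commutator_le _ _
    _ ≤ 2 * sigmaMax H * ((sigmaMax U₁ + sigmaMax U₂) * frobNorm (U₁ - U₂)) := by
        gcongr
        exact frobNorm_gram_sub_gram_le _ _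
    _ ≤ 2 * M * ((α + α) * frobNorm (U₁ - U₂)) := by gcongr
    _ = 4 * α * M * frobNorm (U₁ - U₂) := by ring

/-- Lipschitz continuity of U ↦ 𝒜_U (Lemma 4.4, second inequality). -/
theorem commA_lipschitz
    {n N : ℕ} (H : Matrix (Fin n) (Fin n) ℝ) (hH : H.IsSymm)
    (M α : ℝ) (hM : sigmaMax H ≤ M)
    (U₁ U₂ : Matrix (Fin n) (Fin N) ℝ)
    (hU₁ : sigmaMax U₁ ≤ α) (hU₂ : sigmaMax U₂ ≤ α) :
    frobNorm (commA H U₁ - commA H U₂) ≤ 4 * α * M * frobNorm (U₁ - U₂) :=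
  commA_lipschitz_general H M α hM U₁ U₂ hU₁ hU₂
end
end
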